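/- Let F be a field. With D and ∼ as above, and operations ⊕ and ⊙ defined on D by transporting via the isomorphisms f to a common column and using Maltsev's addition and multiplication, the quotient (D, ⊕, ⊙)/∼ is a field isomorphic to F. -/

import Mathlib

/-- The Heisenberg group over a field `F`: 3×3 upper unitriangular matrices,
represented by their entries `a` at (1,2), `b` at (2,3), `c` at (1,3),
with multiplication induced by matrix multiplication. -/
@[ext] structure Heis (F : Type*) [Field F] where
  a : F
  b : F
  c : F

namespace Heis

variable {F : Type*} [Field F]

instance : Mul (Heis F) := ⟨fun x y => ⟨x.a + y.a, x.b + y.b, x.c + y.c + x.a * y.b⟩⟩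
instance : One (Heis F) := ⟨⟨0, 0, 0⟩⟩
instance : Inv (Heis F) := ⟨fun x => ⟨-x.a, -x.b, x.a * x.b - x.c⟩⟩

@[simp] theorem mul_a (x y : Heis F) : (x * y).a = x.a + y.a := rfl
@[simp] theorem mul_b (x y : Heis F) : (x * y).b = x.b + y.b := rfl
@[simp] theorem mul_c (x y : Heis F) : (x * y).c = x.c + y.c + x.a * y.b := rfl
@[simp] theorem one_a : (1 : Heis F).a = 0 := rfl
@[simp] theorem one_b : (1 : Heis F).b = 0 := rfl
@[simp] theorem one_c : (1 : Heis F).c = 0 := rfl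
@[simp] theorem inv_a (x : Heis F) : (x⁻¹).a = -x.a := rfl
@[simp] theorem inv_b (x : Heis F) : (x⁻¹).b = -x.b := rfl
@[simp] theorem inv_c (x : Heis F) : (x⁻¹).c = x.a * x.b - x.c := rfl

instance : Group (Heis F) where
  mul_assoc x y z := by ext <;> simp <;> ring
  one_mul x := by ext <;> simp
  mul_one x := by ext <;> simp
  inv_mul_cancel x := by ext <;> simp <;> ring

/-- `h a b c` is the unitriangular matrix with superdiagonal entries `a`, `b`
and corner entry `c`. -/
def h (a b c : F) : Heis F := ⟨a, b, c⟩

/-- `Δ u v = u₁v₂ - u₂v₁`. -/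
def Δ (u v : Heis F) : F := u.a * v.b - u.b * v.a

end Heis


namespace Heis

variable {F : Type*} [Field F]

/-- Maltsev's multiplication relation on the center, with parameters `u`, `v`:
`MulR u v x y z` holds iff there exist `x'`, `y'` with `[x',u] = [y',v] = 1`,
`[x',v] = x`, `[u,y'] = y`, and `[x',y'] = z`. -/
def MulR (u v x y z : Heis F) : Prop :=
  ∃ x' y' : Heis F,
    x'⁻¹ * u⁻¹ * x' * u = 1 ∧
    y'⁻¹ * v⁻¹ * y' * v = 1 ∧
    x'⁻¹ * v⁻¹ * x' * v = x ∧
    u⁻¹ * y'⁻¹ * u * y' = y ∧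
    x'⁻¹ * y'⁻¹ * x' * y' = z

/-- `g u v : F → Z(H(F))`, the map `α ↦ h 0 0 (α·Δ u v)`. -/
def g (u v : Heis F) (α : F) : Heis F := h 0 0 (α * Δ u v)

/-- The canonical isomorphism `f_{(u,v),(u',v')} = g_{(u',v')} ∘ g_{(u,v)}⁻¹`
between the Maltsev copies of `F` (for `x` in the center, `g_{(u,v)}⁻¹ x = x.c / Δ u v`). -/
def f (u v u' v' : Heis F) (x : Heis F) : Heis F := g u' v' (x.c / Δ u v)

end Heis

/-!
The center of `H(F)` consists of the elements `h 0 0 c`, and the commutator of `p` and `q` is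
the central element `h 0 0 (Δ p q)`; in particular `u` and `v` commute iff `Δ u v = 0`.
For a non-commuting pair `(u, v)` the map `g u v : α ↦ h 0 0 (α Δ(u,v))` is therefore a bijection
from `F` onto the center, whose inverse is `coord u v x = x.c / Δ u v`, and `(u,v,x) ↦ coord u v x`
is the required map `π`. Multiplication in the center adds the `c`-entries, which gives `⊕`.
For `⊙`, the identity `Δ(x',v) Δ(u,y') = Δ(x',u) Δ(v,y') + Δ(x',y') Δ(u,v)` with
`Δ(x',u) = 0` turns the commutator equations defining Maltsev's multiplication into
`x.c · y.c = z.c · Δ(u,v)`.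
-/

namespace Heis

variable {F : Type*} [Field F]

def coord (u v x : Heis F) : F := x.c / Δ u v

lemma commutator_eq (p q : Heis F) : p⁻¹ * q⁻¹ * p * q = h 0 0 (Δ p q) := by
  ext <;> simp [h, Δ]
  ring

lemma mem_center_iff {x : Heis F} : x ∈ Subgroup.center (Heis F) ↔ x.a = 0 ∧ x.b = 0 := by
  rw [Subgroup.mem_center_iff]
  constructor
  · intro hx
    have ha := congrArg Heis.c (hx ⟨0, 1, 0⟩)
    have hb := congrArg Heis.c (hx ⟨1, 0, 0⟩)
    simp only [mul_c, zero_mul, one_mul, mul_zero, add_zero] at ha hb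
    exact ⟨by linear_combination -ha, by linear_combination hb⟩
  · rintro ⟨ha, hb⟩ y
    ext <;> simp [ha, hb]
    ring

lemma commute_iff_Δ_eq_zero {u v : Heis F} : Commute u v ↔ Δ u v = 0 := by
  constructor
  · intro huv
    have hc := congrArg Heis.c huv.eq
    simp only [mul_c] at hc
    unfold Δ
    linear_combination hc
  · intro hΔ
    unfold Δ at hΔ
    ext <;> simp only [mul_a, mul_b, mul_c] <;> [ring; ring; linear_combination hΔ]

lemma g_mem_center (u v : Heis F) (α : F) : g u v α ∈ Subgroup.center (Heis F) :=
  mem_center_iff.mpr ⟨rfl, rfl⟩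

lemma g_mul_g (u v : Heis F) (α β : F) : g u v α * g u v β = g u v (α + β) := by
  ext <;> simp [g, h]
  ring

variable {u v : Heis F}

lemma coord_g (hΔ : Δ u v ≠ 0) (α : F) : coord u v (g u v α) = α :=
  mul_div_cancel_right₀ α hΔ

lemma g_coord (hΔ : Δ u v ≠ 0) {x : Heis F} (hx : x ∈ Subgroup.center (Heis F)) :
    g u v (coord u v x) = x := by
  obtain ⟨ha, hb⟩ := mem_center_iff.mp hx
  ext
  · exact ha.symm
  · exact hb.symm
  · exact div_mul_cancel₀ x.c hΔ

lemma coord_mul_of_mem_center {x : Heis F} (hx : x ∈ Subgroup.center (Heis F)) (y : Heis F) :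
    coord u v (x * y) = coord u v x + coord u v y := by
  simp [coord, (mem_center_iff.mp hx).1, add_div]

lemma f_eq_iff {u' v' x' : Heis F} (hΔ' : Δ u' v' ≠ 0) (hx' : x' ∈ Subgroup.center (Heis F))
    (y : Heis F) : f u v u' v' y = x' ↔ coord u v y = coord u' v' x' := by
  change g u' v' (coord u v y) = x' ↔ _
  exact ⟨fun hg => by rw [← hg, coord_g hΔ'], fun hy => by rw [hy, g_coord hΔ' hx']⟩

lemma Δ_plucker (p q r s : Heis F) : Δ p r * Δ q s = Δ p q * Δ r s + Δ p s * Δ q r := by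
  simp only [Δ]; ring

lemma MulR.coord_eq_mul (hΔ : Δ u v ≠ 0) {x y z : Heis F} (hxyz : MulR u v x y z) :
    coord u v z = coord u v x * coord u v y := by
  obtain ⟨x', y', hx'u, hy'v, hx'v, huy', hx'y'⟩ := hxyz
  simp only [commutator_eq] at hx'u hy'v hx'v huy' hx'y'
  have hx'u : Δ x' u = 0 := congrArg Heis.c hx'u
  have key : x.c * y.c = z.c * Δ u v := by
    rw [← congrArg Heis.c hx'v, ← congrArg Heis.c huy', ← congrArg Heis.c hx'y']
    simp only [h, Δ_plucker x' u v y', hx'u, zero_mul, zero_add]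
  simp only [coord]
  field_simp
  linear_combination -key

lemma mulR_g (u v : Heis F) (α β : F) : MulR u v (g u v α) (g u v β) (g u v (α * β)) := by
  refine ⟨h (α * u.a) (α * u.b) 0, h (β * v.a) (β * v.b) 0, ?_, ?_, ?_, ?_, ?_⟩ <;>
    rw [commutator_eq] <;> ext <;> simp [g, h, Δ] <;> ring

lemma exists_mul_coord_iff (hΔ : Δ u v ≠ 0) {x : Heis F} (hx : x ∈ Subgroup.center (Heis F))
    (β γ : F) :
    (∃ y z : Heis F, coord u v y = β ∧ coord u v z = γ ∧ x * y = z) ↔ γ = coord u v x + β := by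
  constructor
  · rintro ⟨y, z, rfl, rfl, rfl⟩
    exact coord_mul_of_mem_center hx y
  · rintro rfl
    refine ⟨g u v β, g u v (coord u v x + β), coord_g hΔ β, coord_g hΔ _, ?_⟩
    rw [← g_mul_g, g_coord hΔ hx]

lemma exists_mulR_coord_iff (hΔ : Δ u v ≠ 0) {x : Heis F} (hx : x ∈ Subgroup.center (Heis F))
    (β γ : F) :
    (∃ y z : Heis F, coord u v y = β ∧ coord u v z = γ ∧ MulR u v x y z) ↔
      γ = coord u v x * β := by
  constructor
  · rintro ⟨y, z, rfl, rfl, hxyz⟩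
    exact hxyz.coord_eq_mul hΔ
  · rintro rfl
    refine ⟨g u v β, g u v (coord u v x * β), coord_g hΔ β, coord_g hΔ _, ?_⟩
    simpa only [g_coord hΔ hx] using mulR_g u v (coord u v x) β

end Heis

open Heis

/-- The quotient of `D = {(u,v,x) : uv ≠ vu, x central}` by `∼`, with the
transported operations `⊕` and `⊙`, is a field isomorphic to `F`: there is a
map `π` from `D` onto `F` whose fibers are exactly the `∼`-classes and which
carries `⊕` and `⊙` to addition and multiplication of `F`. -/
theorem heis_quotient_iso_field (F : Type*) [Field F] :
    let D : Set (Heis F × Heis F × Heis F) :=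
      {t | t.1 * t.2.1 ≠ t.2.1 * t.1 ∧ t.2.2 ∈ Subgroup.center (Heis F)}
    let R : (Heis F × Heis F × Heis F) → (Heis F × Heis F × Heis F) → Prop :=
      fun t s => f t.1 t.2.1 s.1 s.2.1 t.2.2 = s.2.2
    let plus : (Heis F × Heis F × Heis F) → (Heis F × Heis F × Heis F) →
        (Heis F × Heis F × Heis F) → Prop :=
      fun t s w => ∃ y z : Heis F,
        R (t.1, t.2.1, y) s ∧ R (t.1, t.2.1, z) w ∧ t.2.2 * y = z
    let times : (Heis F × Heis F × Heis F) → (Heis F × Heis F × Heis F) →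
        (Heis F × Heis F × Heis F) → Prop :=
      fun t s w => ∃ y z : Heis F,
        R (t.1, t.2.1, y) s ∧ R (t.1, t.2.1, z) w ∧ MulR t.1 t.2.1 t.2.2 y z
    ∃ π : (Heis F × Heis F × Heis F) → F,
      (∀ α : F, ∃ t ∈ D, π t = α) ∧
      (∀ t ∈ D, ∀ s ∈ D, (R t s ↔ π t = π s)) ∧
      (∀ t ∈ D, ∀ s ∈ D, ∀ w ∈ D, (plus t s w ↔ π w = π t + π s)) ∧
      (∀ t ∈ D, ∀ s ∈ D, ∀ w ∈ D, (times t s w ↔ π w = π t * π s)) := by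
  intro D R plus times
  have hΔ : ∀ {t}, t ∈ D → Δ t.1 t.2.1 ≠ 0 := fun ht => commute_iff_Δ_eq_zero.not.mp ht.1
  refine ⟨fun t => coord t.1 t.2.1 t.2.2, fun α => ?_, ?_, ?_, ?_⟩
  · have hD : ((⟨1, 0, 0⟩ : Heis F), (⟨0, 1, 0⟩ : Heis F), g ⟨1, 0, 0⟩ ⟨0, 1, 0⟩ α) ∈ D :=
      ⟨commute_iff_Δ_eq_zero.not.mpr (by simp [Δ]), g_mem_center _ _ α⟩
    exact ⟨_, hD, coord_g (hΔ hD) α⟩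
  · rintro t - s hs
    exact f_eq_iff (hΔ hs) hs.2 t.2.2
  · rintro ⟨u, v, x⟩ ht s hs w hw
    simp only [plus, R, f_eq_iff (hΔ hs) hs.2, f_eq_iff (hΔ hw) hw.2]
    exact exists_mul_coord_iff (hΔ ht) ht.2 _ _
  · rintro ⟨u, v, x⟩ ht s hs w hw
    simp only [times, R, f_eq_iff (hΔ hs) hs.2, f_eq_iff (hΔ hw) hw.2]
    exact exists_mulR_coord_iff (hΔ ht) ht.2 _ _
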